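/- arXiv:2307.02134 — 3 statements merged into one kernel-verified Lean document; each statement's English description precedes it below -/
import Mathlib

section
/- Fix K ≥ 1 and define φ_K, φ̲_K : H → {0,1}^ℤ by: φ_K(h)(n) = 1 iff (h + Δ(n))_b ≠ 0 for all b ∈ 𝓑_K := {b ∈ 𝓑 : b ≤ K}, and φ̲_K(h)(n) = φ̲(h)(n) if n ∈ Per(φ̲(h), lcm(𝓑*_K)) and φ̲_K(h)(n) = 0 otherwise, where 𝓑*_K = {b* ∈ 𝓑* : b* ≤ K}. Then φ_K and φ̲_K each depend only on finitely many coordinates: there is a finite set F ⊆ 𝓑 such that whenever h₁, h₂ ∈ H satisfy (h₁)_b = (h₂)_b for all b ∈ F, one has φ_K(h₁) = φ_K(h₂) and φ̲_K(h₁) = φ̲_K(h₂). In particular, φ_K and φ̲_K are continuous. -/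
open MeasureTheory Filter Topology
open scoped Classical

noncomputable section
namespace BFree


def cnt (A : Set ℤ) (L : ℕ) : ℝ := ∑ n ∈ Finset.Icc (1:ℤ) (L:ℤ), if n ∈ A then (1:ℝ) else 0

def natDensity (A : Set ℤ) (d : ℝ) : Prop := Tendsto (fun L : ℕ => cnt A L / L) atTop (𝓝 d)

def upperDensity (A : Set ℤ) : ℝ := atTop.limsup fun L : ℕ => cnt A L / L

def lowerDensity (A : Set ℤ) : ℝ := atTop.liminf fun L : ℕ => cnt A L / L

def logDensity (A : Set ℤ) (d : ℝ) : Prop :=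
  Tendsto (fun L : ℕ =>
      (∑ n ∈ Finset.Icc (1:ℤ) (L:ℤ), if n ∈ A then (n:ℝ)⁻¹ else 0) / Real.log L)
    atTop (𝓝 d)

def MB (B : Set ℕ) : Set ℤ := {n : ℤ | ∃ b ∈ B, (b:ℤ) ∣ n}

def FB (B : Set ℕ) : Set ℤ := {n : ℤ | n ∉ MB B}

def eta (B : Set ℕ) : ℤ → Bool := fun n => if n ∈ FB B then true else false

def shift (x : ℤ → Bool) : ℤ → Bool := fun n => x (n + 1)

def shiftn (k : ℕ) (x : ℤ → Bool) : ℤ → Bool := fun n => x (n + (k:ℤ))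

def orbitClosure (x : ℤ → Bool) : Set (ℤ → Bool) :=
  closure {y | ∃ m : ℤ, y = fun n => x (n + m)}

def Xeta (B : Set ℕ) : Set (ℤ → Bool) := orbitClosure (eta B)

def InvM (X : Set (ℤ → Bool)) : Set (Measure (ℤ → Bool)) :=
  {μ | IsProbabilityMeasure μ ∧ μ.map shift = μ ∧ μ X = 1}

def primPart (S : Set ℕ) : Set ℕ := {b ∈ S | ∀ b' ∈ S, b' ∣ b → b' = b}

def Dset (B : Set ℕ) : Set ℕ :=
  {d | ∃ A : Set ℕ, A.Infinite ∧ (∀ a ∈ A, 0 < a) ∧ A.Pairwise Nat.Coprime ∧ ∀ a ∈ A, d * a ∈ B}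

def Bstar (B : Set ℕ) : Set ℕ := primPart (B ∪ Dset B)

def etaStar (B : Set ℕ) : ℤ → Bool := eta (Bstar B)

def Behrend (A : Set ℕ) : Prop := (∀ a ∈ A, 0 < a) ∧ logDensity (MB A) 1

def Cset (B : Set ℕ) : Set ℕ := {c | ∃ A : Set ℕ, Behrend A ∧ ∀ a ∈ A, c * a ∈ B}

def Bprime (B : Set ℕ) : Set ℕ := primPart (B ∪ Cset B)

def etaPrime (B : Set ℕ) : ℤ → Bool := eta (Bprime B)

def Taut (B : Set ℕ) : Prop :=
  ∀ b ∈ B, ∃ d1 d2 : ℝ, logDensity (MB (B \ {b})) d1 ∧ logDensity (MB B) d2 ∧ d1 < d2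

def Per (x : ℤ → Bool) (s : ℕ) : Set ℤ := {i | ∀ k : ℤ, x (i + (s:ℤ) * k) = x i}

def IsToeplitz (x : ℤ → Bool) : Prop := ∀ i : ℤ, ∃ s : ℕ, 0 < s ∧ i ∈ Per x s

def RegularToeplitz (x : ℤ → Bool) : Prop :=
  IsToeplitz x ∧ ∃ δ : ℕ → ℝ,
    (∀ r : ℕ, natDensity (⋃ s ∈ Finset.Icc 1 r, Per x s) (δ r)) ∧ Tendsto δ atTop (𝓝 1)

def QuasiGeneric (ℓ : ℕ → ℕ) (x : ℤ → Bool) (ν : Measure (ℤ → Bool)) : Prop :=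
  ∀ f : C((ℤ → Bool), ℝ),
    Tendsto (fun i => (∑ n ∈ Finset.Icc 1 (ℓ i), f (shiftn n x)) / (ℓ i : ℝ)) atTop
      (𝓝 (∫ y, f y ∂ν))

def RealizesLowerDensity (A : Set ℤ) (ℓ : ℕ → ℕ) : Prop :=
  Tendsto ℓ atTop atTop ∧ Tendsto (fun i => cnt A (ℓ i) / (ℓ i : ℝ)) atTop (𝓝 (lowerDensity A))

def IsMirsky (B : Set ℕ) (ν : Measure (ℤ → Bool)) : Prop :=
  IsProbabilityMeasure ν ∧ ∀ ℓ : ℕ → ℕ, RealizesLowerDensity (MB B) ℓ → QuasiGeneric ℓ (eta B) ν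

def blocks (X : Set (ℤ → Bool)) (n : ℕ) : Set (Fin n → Bool) :=
  {w | ∃ x ∈ X, ∃ m : ℤ, ∀ i : Fin n, x (m + (i:ℤ)) = w i}

def pCount (X : Set (ℤ → Bool)) (n : ℕ) : ℕ := (blocks X n).ncard

def topEnt (X : Set (ℤ → Bool)) : ℝ :=
  atTop.limsup fun n : ℕ => Real.logb 2 (pCount X n) / n

def cylinder {n : ℕ} (w : Fin n → Bool) : Set (ℤ → Bool) := {x | ∀ i : Fin n, x ((i:ℕ):ℤ) = w i}

def blockEntropy (μ : Measure (ℤ → Bool)) (n : ℕ) : ℝ :=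
  -∑ w : Fin n → Bool, ((μ (cylinder w)).toReal * Real.logb 2 (μ (cylinder w)).toReal)

def measEnt (μ : Measure (ℤ → Bool)) : ℝ := atTop.liminf fun n : ℕ => blockEntropy μ n / n


instance (n : ℕ) : TopologicalSpace (ZMod n) := ⊥
instance (n : ℕ) : DiscreteTopology (ZMod n) := ⟨rfl⟩
instance (n : ℕ) : IsTopologicalAddGroup (ZMod n) :=
  { continuous_add := continuous_of_discreteTopology
    continuous_neg := continuous_of_discreteTopology }

abbrev Gr (B : Set ℕ) := ∀ b : B, ZMod (b : ℕ)

def Delta (B : Set ℕ) : ℤ →+ Gr B where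
  toFun n := fun b => (n : ZMod (b:ℕ))
  map_zero' := by funext b; simp
  map_add' m n := by funext b; simp [Pi.add_apply]

def Hsub (B : Set ℕ) : AddSubgroup (Gr B) := (Delta B).range.topologicalClosure

abbrev Hgp (B : Set ℕ) := ↥(Hsub B)

instance (B : Set ℕ) : MeasurableSpace (Hgp B) := borel _
instance (B : Set ℕ) : BorelSpace (Hgp B) := ⟨rfl⟩

def DeltaH (B : Set ℕ) (n : ℤ) : Hgp B :=
  ⟨Delta B n, (Delta B).range.le_topologicalClosure (AddMonoidHom.mem_range.mpr ⟨n, rfl⟩)⟩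

def W (B : Set ℕ) : Set (Hgp B) := {h | ∀ b : B, (h : Gr B) b ≠ 0}

def Wu (B : Set ℕ) : Set (Hgp B) := closure (interior (W B))

def phi (B : Set ℕ) (h : Hgp B) : ℤ → Bool :=
  fun n => if h + DeltaH B n ∈ W B then true else false

def phiu (B : Set ℕ) (h : Hgp B) : ℤ → Bool :=
  fun n => if h + DeltaH B n ∈ Wu B then true else false

def Xphi (B : Set ℕ) : Set (ℤ → Bool) := closure (Set.range (phi B))

def IsHaar (B : Set ℕ) (m : Measure (Hgp B)) : Prop :=
  IsProbabilityMeasure m ∧ ∀ g : Hgp B, m.map (fun h => g + h) = m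

def triangle (B : Set ℕ) (mH : Measure (Hgp B)) : Measure ((ℤ → Bool) × (ℤ → Bool)) :=
  mH.map fun h => (phiu B h, phi B h)

/-- `𝓑_K = {b ∈ 𝓑 : b ≤ K}` as a finset. -/
def BKfin (B : Set ℕ) (K : ℕ) : Finset ℕ := (Finset.Icc 1 K).filter (· ∈ B)

/-- `lcm(𝓑*_K)` where `𝓑*_K = {b* ∈ 𝓑* : b* ≤ K}`. -/
def lcmBstarK (B : Set ℕ) (K : ℕ) : ℕ := (BKfin (Bstar B) K).lcm id

/-- `φ_K(h)(n) = 1` iff `(h + Δ(n))_b ≠ 0` for all `b ∈ 𝓑_K`. -/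
def phiK (B : Set ℕ) (K : ℕ) (h : Hgp B) : ℤ → Bool :=
  fun n =>
    if ∀ (b : ℕ) (hb : b ∈ B), b ≤ K → ((h + DeltaH B n : Hgp B) : Gr B) ⟨b, hb⟩ ≠ 0 then
      true
    else false

/-- `φ̲_K(h)(n) = φ̲(h)(n)` if `n ∈ Per(φ̲(h), lcm(𝓑*_K))`, and `0` otherwise. -/
def phiuK (B : Set ℕ) (K : ℕ) (h : Hgp B) : ℤ → Bool :=
  fun n => if n ∈ Per (phiu B h) (lcmBstarK B K) then phiu B h n else false


section Statement12Aux

variable {B : Set ℕ}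

variable {B : Set ℕ}

lemma unionD_pos (hB : 0 ∉ B) {x : ℕ} (hx : x ∈ B ∪ Dset B) : 0 < x := by
  rcases hx with hx | hx
  · exact Nat.pos_of_ne_zero (fun h => hB (h ▸ hx))
  · obtain ⟨A, hAinf, hApos, hApair, hAmul⟩ := hx
    obtain ⟨a, ha⟩ := hAinf.nonempty
    by_contra h
    push_neg at h
    interval_cases x
    exact hB (by simpa using hAmul a ha)

lemma exists_dvd_mem {x : ℕ} (hx : x ∈ B ∪ Dset B) : ∃ c, c ∈ B ∧ x ∣ c := by
  rcases hx with hx | hx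
  · exact ⟨x, hx, dvd_rfl⟩
  · obtain ⟨A, hAinf, hApos, hApair, hAmul⟩ := hx
    obtain ⟨a, ha⟩ := hAinf.nonempty
    exact ⟨x * a, hAmul a ha, Dvd.intro a rfl⟩

/-- a chosen element of `B` divisible by `x`. -/
def cBf (B : Set ℕ) (x : ℕ) : ℕ :=
  if h : ∃ c, c ∈ B ∧ x ∣ c then h.choose else 1

lemma cBf_memB {x : ℕ} (hx : x ∈ B ∪ Dset B) : cBf B x ∈ B := by
  have h : ∃ c, c ∈ B ∧ x ∣ c := exists_dvd_mem hx
  rw [cBf, dif_pos h]; exact h.choose_spec.1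

lemma cBf_dvd {x : ℕ} (hx : x ∈ B ∪ Dset B) : x ∣ cBf B x := by
  have h : ∃ c, c ∈ B ∧ x ∣ c := exists_dvd_mem hx
  rw [cBf, dif_pos h]; exact h.choose_spec.2

lemma Bstar_subset_union : Bstar B ⊆ B ∪ Dset B := fun _ h => h.1

lemma exists_bstar_dvd (hB : 0 ∉ B) : ∀ x, x ∈ B ∪ Dset B → ∃ b', b' ∈ Bstar B ∧ b' ∣ x := by
  intro x
  induction x using Nat.strong_induction_on with
  | _ x ih =>
    intro hx
    by_cases hxs : x ∈ Bstar B
    · exact ⟨x, hxs, dvd_rfl⟩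
    · have : ¬ (x ∈ B ∪ Dset B ∧ ∀ b' ∈ B ∪ Dset B, b' ∣ x → b' = x) := hxs
      push_neg at this
      obtain ⟨b', hb', hdvd, hne⟩ := this hx
      have hlt : b' < x :=
        lt_of_le_of_ne (Nat.le_of_dvd (unionD_pos hB hx) hdvd) hne
      obtain ⟨b'', hb''⟩ := ih b' hlt hb'
      exact ⟨b'', hb''.1, dvd_trans hb''.2 hdvd⟩

/-- coprime witness selection -/
lemma coprime_witness {x : ℕ} (hx : x ∈ B ∪ Dset B) (N : ℕ) (hN : N ≠ 0) :
    ∃ a, Nat.Coprime a N ∧ x * a ∈ B := by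
  rcases hx with hx | hx
  · exact ⟨1, Nat.coprime_one_left N, by simpa using hx⟩
  · obtain ⟨A, hAinf, hApos, hApair, hAmul⟩ := hx
    have hbadfin : {a ∈ A | ¬ Nat.Coprime a N}.Finite := by
      have him : ((fun a => (Nat.gcd a N).minFac) '' {a ∈ A | ¬ Nat.Coprime a N}).Finite := by
        apply (N.primeFactors.finite_toSet).subset
        rintro p ⟨a, ⟨haA, hanc⟩, rfl⟩
        have hprime : Nat.Prime (Nat.gcd a N).minFac := Nat.minFac_prime hanc
        exact Nat.mem_primeFactors.mpr
          ⟨hprime, ((Nat.gcd a N).minFac_dvd).trans (Nat.gcd_dvd_right a N), hN⟩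
      apply Set.Finite.of_finite_image him
      rintro a₁ ⟨ha₁, hc₁⟩ a₂ ⟨ha₂, hc₂⟩ heq
      by_contra hne
      have hcop := hApair ha₁ ha₂ hne
      have hp : Nat.Prime (Nat.gcd a₁ N).minFac := Nat.minFac_prime hc₁
      have h1 : (Nat.gcd a₁ N).minFac ∣ a₁ := (Nat.minFac_dvd _).trans (Nat.gcd_dvd_left _ _)
      have h2 : (Nat.gcd a₁ N).minFac ∣ a₂ := by
        simp only at heq
        rw [heq]; exact (Nat.minFac_dvd _).trans (Nat.gcd_dvd_left _ _)
      have hd : (Nat.gcd a₁ N).minFac ∣ Nat.gcd a₁ a₂ := Nat.dvd_gcd h1 h2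
      rw [hcop] at hd
      exact hp.one_lt.ne' (Nat.dvd_one.mp hd)
    have : (A \ {a ∈ A | ¬ Nat.Coprime a N}).Infinite := hAinf.diff hbadfin
    obtain ⟨a, haA, hnb⟩ := this.nonempty
    refine ⟨a, ?_, hAmul a haA⟩
    by_contra h
    exact hnb ⟨haA, h⟩

lemma bezout_ap (x : ℤ) (L b : ℕ) (h : ((Nat.gcd L b : ℤ)) ∣ x) :
    ∃ t : ℤ, (b : ℤ) ∣ x + L * t := by
  obtain ⟨y, hy⟩ := h
  refine ⟨-(Nat.gcdA L b * y), Nat.gcdB L b * y, ?_⟩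
  have hg := Nat.gcd_eq_gcd_ab L b
  rw [hy]
  have : (L:ℤ) * -(L.gcdA b * y) = -((L:ℤ) * L.gcdA b) * y := by ring
  rw [this, hg]
  ring

lemma lcm_ne_zero' (T : Finset ℕ) (hT : ∀ b ∈ T, b ≠ 0) : T.lcm id ≠ 0 := by
  induction T using Finset.induction_on with
  | empty => simp
  | @insert a s hx ih =>
    rw [Finset.lcm_insert]
    exact Nat.lcm_ne_zero (hT a (Finset.mem_insert_self a s))
      (ih (fun b hb => hT b (Finset.mem_insert_of_mem hb)))

lemma lcmBstarK_ne_zero (B : Set ℕ) (K : ℕ) : lcmBstarK B K ≠ 0 := by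
  apply lcm_ne_zero'
  intro b hb
  rw [BKfin, Finset.mem_filter, Finset.mem_Icc] at hb
  omega

lemma mem_BKfin_iff {S : Set ℕ} {K b : ℕ} : b ∈ BKfin S K ↔ (1 ≤ b ∧ b ≤ K) ∧ b ∈ S := by
  rw [BKfin, Finset.mem_filter, Finset.mem_Icc]

variable {B : Set ℕ}

lemma coord_continuous (i : ↥B) : Continuous (fun g : Hgp B => (g : Gr B) i) :=
  (continuous_apply i).comp continuous_subtype_val

lemma mem_closure_range_Delta (h : Hgp B) :
    (h : Gr B) ∈ closure (((Delta B).range : AddSubgroup (Gr B)) : Set (Gr B)) := h.2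

/-- density: approximate any `h ∈ H` by an integer on finitely many coordinates. -/
lemma approx (h : Hgp B) (T : Finset ℕ) (hT : ∀ b ∈ T, b ∈ B) :
    ∃ m : ℤ, ∀ b (hbT : b ∈ T) (hbB : b ∈ B), ((m : ZMod b)) = (h : Gr B) ⟨b, hbB⟩ := by
  classical
  set U : Set (Gr B) :=
    ⋂ i : {b // b ∈ T}, {g : Gr B | g ⟨i.1, hT i.1 i.2⟩ = (h : Gr B) ⟨i.1, hT i.1 i.2⟩} with hU
  have hUopen : IsOpen U := by
    apply isOpen_iInter_of_finite
    intro i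
    have : {g : Gr B | g ⟨i.1, hT i.1 i.2⟩ = (h : Gr B) ⟨i.1, hT i.1 i.2⟩}
        = (fun g : Gr B => g ⟨i.1, hT i.1 i.2⟩) ⁻¹'
          {(h : Gr B) ⟨i.1, hT i.1 i.2⟩} := rfl
    rw [this]
    exact (continuous_apply (⟨i.1, hT i.1 i.2⟩ : ↥B)).isOpen_preimage _ (isOpen_discrete _)
  have hhU : (h : Gr B) ∈ U := by
    rw [hU]; exact Set.mem_iInter.mpr (fun i => rfl)
  have := (mem_closure_iff.mp (mem_closure_range_Delta h)) U hUopen hhU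
  obtain ⟨g, hgU, hgR⟩ := this
  obtain ⟨m, rfl⟩ := AddMonoidHom.mem_range.mp hgR
  refine ⟨m, fun b hbT hbB => ?_⟩
  have := Set.mem_iInter.mp hgU ⟨b, hbT⟩
  have hsub : (⟨b, hT b hbT⟩ : ↥B) = ⟨b, hbB⟩ := rfl
  rw [hsub] at this
  exact this

lemma coe_add_apply (h h' : Hgp B) (i : ↥B) :
    ((h + h' : Hgp B) : Gr B) i = (h : Gr B) i + (h' : Gr B) i := rfl

lemma DeltaH_coe_apply (n : ℤ) (i : ↥B) : ((DeltaH B n : Hgp B) : Gr B) i = (n : ZMod i.1) := rfl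

/-- from interior membership, extract a finite cylinder. -/
lemma interior_cylinder {g : Hgp B} (hg : g ∈ interior (W B)) :
    ∃ T : Finset ℕ, (∀ b ∈ T, b ∈ B) ∧
      ∀ g' : Hgp B, (∀ b (hbT : b ∈ T) (hbB : b ∈ B), (g' : Gr B) ⟨b, hbB⟩ = (g : Gr B) ⟨b, hbB⟩) →
        g' ∈ W B := by
  have hopen : IsOpen (interior (W B)) := isOpen_interior
  obtain ⟨U, hUopen, hUpre⟩ := isOpen_induced_iff.mp hopen
  have hgU : (g : Gr B) ∈ U := by
    have : g ∈ Subtype.val ⁻¹' U := by rw [hUpre]; exact hg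
    exact this
  obtain ⟨I, u, hIu, hpi⟩ := (isOpen_pi_iff.mp hUopen) _ hgU
  refine ⟨I.image (fun i : ↥B => (i : ℕ)), ?_, ?_⟩
  · intro b hb
    obtain ⟨i, _, hieq⟩ := Finset.mem_image.mp hb
    exact hieq ▸ i.2
  · intro g' hagree
    have hg'U : (g' : Gr B) ∈ U := by
      apply hpi
      intro i hi
      have hbT : (i : ℕ) ∈ I.image (fun i : ↥B => (i : ℕ)) := Finset.mem_image_of_mem _ hi
      have := hagree i.1 hbT i.2
      have hsub : (⟨i.1, i.2⟩ : ↥B) = i := rfl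
      rw [hsub] at this
      rw [this]
      exact (hIu i hi).2
    have : g' ∈ Subtype.val ⁻¹' U := hg'U
    rw [hUpre] at this
    exact interior_subset this

variable {B : Set ℕ}

lemma mem_Tf_union {K β : ℕ} (hβ : β ∈ BKfin (Bstar B) K) : β ∈ B ∪ Dset B :=
  Bstar_subset_union (mem_BKfin_iff.mp hβ).2

lemma dvd_int_of_forall_dvd {T : Finset ℕ} {z : ℤ} (h : ∀ β ∈ T, (β : ℤ) ∣ z) :
    ((T.lcm id : ℕ) : ℤ) ∣ z := by
  have h' : ∀ β ∈ T, β ∣ z.natAbs := by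
    intro β hβ
    have := h β hβ
    rw [← Int.natAbs_dvd_natAbs, Int.natAbs_natCast] at this
    exact this
  have : T.lcm id ∣ z.natAbs := Finset.lcm_dvd h'
  rw [← Int.natAbs_dvd_natAbs, Int.natAbs_natCast]
  exact this

lemma int_dvd_sub_of_cast_eq {c : ℕ} {m₁ m₂ : ℤ} (h : (m₁ : ZMod c) = (m₂ : ZMod c)) :
    (c : ℤ) ∣ m₁ - m₂ := by
  have := Int.ModEq.dvd ((ZMod.intCast_eq_intCast_iff m₁ m₂ c).mp h)
  rwa [← dvd_sub_comm] at this

/-- transfer (C2): value of `g` modulo any `d ∣ lcmBstarK` at any coordinate is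
computed from the integer `m` matching `g` at the chosen witness coordinates. -/
lemma castd_eq (K : ℕ) (g : Hgp B) (m : ℤ)
    (hm : ∀ β (hβ : β ∈ BKfin (Bstar B) K),
      ((m : ZMod (cBf B β)) = (g : Gr B) ⟨cBf B β, cBf_memB (mem_Tf_union hβ)⟩))
    {d c' : ℕ} (hds : d ∣ lcmBstarK B K) (hc' : c' ∈ B) (hdc' : d ∣ c') :
    ZMod.castHom hdc' (ZMod d) ((g : Gr B) ⟨c', hc'⟩) = (m : ZMod d) := by
  classical
  set T : Finset ℕ := ((BKfin (Bstar B) K).image (cBf B)) ∪ {c'} with hT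
  have hTB : ∀ b ∈ T, b ∈ B := by
    intro b hb
    rw [hT, Finset.mem_union, Finset.mem_image] at hb
    rcases hb with ⟨β, hβ, rfl⟩ | hb
    · exact cBf_memB (mem_Tf_union hβ)
    · rw [Finset.mem_singleton] at hb; exact hb ▸ hc'
  obtain ⟨r, hr⟩ := approx g T hTB
  -- for each β in the index set, β divides r - m
  have hβdvd : ∀ β ∈ BKfin (Bstar B) K, (β : ℤ) ∣ r - m := by
    intro β hβ
    have hcB : cBf B β ∈ T := by
      rw [hT, Finset.mem_union]; left; exact Finset.mem_image_of_mem _ hβ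
    have h1 : (r : ZMod (cBf B β)) = (m : ZMod (cBf B β)) := by
      rw [hr (cBf B β) hcB (cBf_memB (mem_Tf_union hβ)), hm β hβ]
    have h3 : (r : ZMod β) = (m : ZMod β) := by
      have := congrArg (ZMod.castHom (cBf_dvd (mem_Tf_union hβ)) (ZMod β)) h1
      rwa [map_intCast, map_intCast] at this
    exact int_dvd_sub_of_cast_eq h3
  have hlcm : ((lcmBstarK B K : ℕ) : ℤ) ∣ r - m := by
    rw [lcmBstarK]
    exact dvd_int_of_forall_dvd hβdvd
  have hd : (d : ℤ) ∣ r - m := dvd_trans (Int.natCast_dvd_natCast.mpr hds) hlcm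
  have hrd : (r : ZMod d) = (m : ZMod d) := by
    exact (ZMod.intCast_eq_intCast_iff r m d).mpr (Int.modEq_iff_dvd.mpr (dvd_sub_comm.mp hd))
  have hc'T : c' ∈ T := by rw [hT, Finset.mem_union]; right; exact Finset.mem_singleton_self c'
  rw [← hr c' hc'T hc', map_intCast, hrd]

variable {B : Set ℕ}

lemma cast_eq_of_int_dvd {c : ℕ} {m₁ m₂ : ℤ} (h : (c : ℤ) ∣ m₁ - m₂) :
    (m₁ : ZMod c) = (m₂ : ZMod c) :=
  (ZMod.intCast_eq_intCast_iff m₁ m₂ c).mpr (Int.modEq_iff_dvd.mpr (dvd_sub_comm.mp h))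

lemma DeltaH_add (a b : ℤ) : DeltaH B (a + b) = DeltaH B a + DeltaH B b :=
  Subtype.ext (map_add (Delta B) a b)

lemma coord_add_delta (h : Hgp B) (n : ℤ) (i : ↥B) :
    ((h + DeltaH B n : Hgp B) : Gr B) i = (h : Gr B) i + (n : ZMod i.1) := rfl

lemma DeltaH_coord (m : ℤ) (i : ↥B) : ((DeltaH B m : Hgp B) : Gr B) i = (m : ZMod i.1) := rfl

/-- (L7) every element of `Wu` has nonzero reduction modulo every `b' ∈ 𝓑 ∪ D`. -/
lemma wu_cast_ne (hB : 0 ∉ B) {b' c₂ : ℕ} (hb' : b' ∈ B ∪ Dset B) (hc₂ : c₂ ∈ B)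
    (hdvd : b' ∣ c₂) {g : Hgp B} (hg : g ∈ Wu B) :
    ZMod.castHom hdvd (ZMod b') ((g : Gr B) ⟨c₂, hc₂⟩) ≠ 0 := by
  classical
  set S : Set (Hgp B) := {g' | ZMod.castHom hdvd (ZMod b') ((g' : Gr B) ⟨c₂, hc₂⟩) ≠ 0} with hS
  have hSclosed : IsClosed S := by
    have : Sᶜ = (fun g' : Hgp B =>
        ZMod.castHom hdvd (ZMod b') ((g' : Gr B) ⟨c₂, hc₂⟩)) ⁻¹' {0} := by
      ext g'; simp [hS]
    rw [← isOpen_compl_iff, this]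
    exact ((continuous_of_discreteTopology).comp (coord_continuous ⟨c₂, hc₂⟩)).isOpen_preimage
      _ (isOpen_discrete _)
  have hsub : interior (W B) ⊆ S := by
    intro g' hg'
    by_contra h0
    rw [hS, Set.mem_setOf_eq, not_not] at h0
    obtain ⟨T, hTB, hcyl⟩ := interior_cylinder hg'
    set T' : Finset ℕ := T ∪ {c₂} with hT'
    have hT'B : ∀ b ∈ T', b ∈ B := by
      intro b hb
      rw [hT', Finset.mem_union, Finset.mem_singleton] at hb
      rcases hb with hb | rfl
      · exact hTB b hb
      · exact hc₂
    obtain ⟨m, hm⟩ := approx g' T' hT'B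
    have hb'm : (b' : ℤ) ∣ m := by
      have h1 : (m : ZMod c₂) = (g' : Gr B) ⟨c₂, hc₂⟩ :=
        hm c₂ (by rw [hT']; exact Finset.mem_union_right _ (Finset.mem_singleton_self c₂)) hc₂
      have h2 : ((m : ℤ) : ZMod b') = 0 := by
        have := congrArg (ZMod.castHom hdvd (ZMod b')) h1
        rwa [map_intCast, h0] at this
      exact (ZMod.intCast_zmod_eq_zero_iff_dvd m b').mp h2
    set L : ℕ := T'.lcm id with hL
    have hLne : L ≠ 0 := lcm_ne_zero' T' (fun b hb => Nat.pos_of_ne_zero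
      (fun h => hB (h ▸ hT'B b hb)) |>.ne')
    obtain ⟨a, hacop, haB⟩ := coprime_witness hb' L hLne
    have hgcd : (Nat.gcd L (b' * a) : ℤ) ∣ m := by
      have h1 : Nat.gcd L (b' * a) ∣ b' := by
        have hc : (Nat.gcd L (b' * a)).Coprime a :=
          ((hacop.coprime_dvd_right (Nat.gcd_dvd_left L (b' * a)))).symm
        exact hc.dvd_of_dvd_mul_right (Nat.gcd_dvd_right L (b' * a))
      exact dvd_trans (Int.natCast_dvd_natCast.mpr h1) hb'm
    obtain ⟨t, ht⟩ := bezout_ap m L (b' * a) hgcd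
    have hmem : DeltaH B (m + L * t) ∈ W B := by
      apply hcyl
      intro b hbT hbB
      have hbL : (b : ℤ) ∣ (m + L * t) - m := by
        simp only [add_sub_cancel_left]
        exact Dvd.dvd.mul_right (Int.natCast_dvd_natCast.mpr
          (by rw [hL]; exact Finset.dvd_lcm (by rw [hT']; exact Finset.mem_union_left _ hbT))) t
      rw [DeltaH_coord]
      rw [cast_eq_of_int_dvd hbL]
      exact hm b (by rw [hT']; exact Finset.mem_union_left _ hbT) hbB
    have := hmem ⟨b' * a, haB⟩
    rw [DeltaH_coord] at this
    exact this ((ZMod.intCast_zmod_eq_zero_iff_dvd _ _).mpr ht)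
  exact (hSclosed.closure_subset ((closure_mono hsub) hg)) 

/-- the finite description predicate. -/
def GoodQ (B : Set ℕ) (K : ℕ) (h : Hgp B) (n : ℤ) : Prop :=
  ∀ b' (_ : b' ∈ Bstar B) (c : ℕ) (hc : c ∈ B) (hdc : Nat.gcd (lcmBstarK B K) b' ∣ c),
    ZMod.castHom hdc (ZMod (Nat.gcd (lcmBstarK B K) b'))
      (((h + DeltaH B n : Hgp B) : Gr B) ⟨c, hc⟩) ≠ 0

/-- main lemma, interior part. -/
lemma mem_intW_of_goodq (hB : 0 ∉ B) (K : ℕ) (h : Hgp B) (n : ℤ)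
    (hQ : GoodQ B K h n) (k : ℤ) :
    h + DeltaH B (n + (lcmBstarK B K : ℤ) * k) ∈ interior (W B) := by
  classical
  set s : ℕ := lcmBstarK B K with hs
  set gk : Hgp B := h + DeltaH B (n + (s : ℤ) * k) with hgk
  set Tf : Finset ℕ := BKfin (Bstar B) K with hTf
  set U : Set (Hgp B) := ⋂ β : {β // β ∈ Tf},
    {g' : Hgp B | (g' : Gr B) ⟨cBf B β.1, cBf_memB (mem_Tf_union β.2)⟩
      = (gk : Gr B) ⟨cBf B β.1, cBf_memB (mem_Tf_union β.2)⟩} with hU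
  have hUopen : IsOpen U := by
    apply isOpen_iInter_of_finite
    intro β
    have : {g' : Hgp B | (g' : Gr B) ⟨cBf B β.1, cBf_memB (mem_Tf_union β.2)⟩
        = (gk : Gr B) ⟨cBf B β.1, cBf_memB (mem_Tf_union β.2)⟩}
        = (fun g' : Hgp B => (g' : Gr B) ⟨cBf B β.1, cBf_memB (mem_Tf_union β.2)⟩) ⁻¹'
          {(gk : Gr B) ⟨cBf B β.1, cBf_memB (mem_Tf_union β.2)⟩} := rfl
    rw [this]
    exact (coord_continuous _).isOpen_preimage _ (isOpen_discrete _)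
  have hgkU : gk ∈ U := Set.mem_iInter.mpr (fun β => rfl)
  have hUW : U ⊆ W B := by
    intro g' hg'U
    intro i
    by_contra h0
    obtain ⟨b₀, hb₀⟩ := i
    obtain ⟨b', hb'star, hb'dvd⟩ := exists_bstar_dvd hB b₀ (Or.inl hb₀)
    set d : ℕ := Nat.gcd s b' with hd
    have hds : d ∣ s := Nat.gcd_dvd_left s b'
    have hdb' : d ∣ b' := Nat.gcd_dvd_right s b'
    -- approximate g' on F2 ∪ {b₀}
    set T : Finset ℕ := (Tf.image (cBf B)) ∪ {b₀} with hT
    have hTB : ∀ b ∈ T, b ∈ B := by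
      intro b hb
      rw [hT, Finset.mem_union, Finset.mem_image] at hb
      rcases hb with ⟨β, hβ, rfl⟩ | hb
      · exact cBf_memB (mem_Tf_union hβ)
      · rw [Finset.mem_singleton] at hb; exact hb ▸ hb₀
    obtain ⟨m, hm⟩ := approx g' T hTB
    have hb₀m : (b₀ : ℤ) ∣ m := by
      have h1 : (m : ZMod b₀) = (g' : Gr B) ⟨b₀, hb₀⟩ :=
        hm b₀ (by rw [hT]; exact Finset.mem_union_right _ (Finset.mem_singleton_self b₀)) hb₀
      rw [h0] at h1
      exact (ZMod.intCast_zmod_eq_zero_iff_dvd m b₀).mp h1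
    have hdm : (d : ℤ) ∣ m :=
      dvd_trans (Int.natCast_dvd_natCast.mpr (dvd_trans hdb' hb'dvd)) hb₀m
    -- use the transfer lemma on gk
    have hmg : ∀ β (hβ : β ∈ BKfin (Bstar B) K),
        ((m : ZMod (cBf B β)) = (gk : Gr B) ⟨cBf B β, cBf_memB (mem_Tf_union hβ)⟩) := by
      intro β hβ
      have h1 : (m : ZMod (cBf B β)) = (g' : Gr B) ⟨cBf B β, cBf_memB (mem_Tf_union hβ)⟩ :=
        hm (cBf B β) (by rw [hT]; exact Finset.mem_union_left _ (Finset.mem_image_of_mem _ hβ))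
          (cBf_memB (mem_Tf_union hβ))
      rw [h1]
      exact Set.mem_iInter.mp hg'U ⟨β, hβ⟩
    have hdc' : d ∣ cBf B b' := dvd_trans hdb' (cBf_dvd (Bstar_subset_union hb'star))
    have hc' : cBf B b' ∈ B := cBf_memB (Bstar_subset_union hb'star)
    have htr := castd_eq K gk m hmg hds hc' hdc'
    -- compute: castHom hdc' ((h + ΔH n)_(c')) = 0
    have hzero : ZMod.castHom hdc' (ZMod d)
        (((h + DeltaH B n : Hgp B) : Gr B) ⟨cBf B b', hc'⟩) = 0 := by
      have hsplit : gk = (h + DeltaH B n) + DeltaH B ((s:ℤ)*k) := by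
        rw [hgk, DeltaH_add, add_assoc]
      have hco : (gk : Gr B) ⟨cBf B b', hc'⟩
          = ((h + DeltaH B n : Hgp B) : Gr B) ⟨cBf B b', hc'⟩ + (((s:ℤ)*k : ℤ) : ZMod (cBf B b')) := by
        rw [hsplit]; rfl
      have hsk : ZMod.castHom hdc' (ZMod d) ((((s:ℤ)*k : ℤ) : ZMod (cBf B b'))) = 0 := by
        rw [map_intCast]
        exact (ZMod.intCast_zmod_eq_zero_iff_dvd _ _).mpr
          (Dvd.dvd.mul_right (Int.natCast_dvd_natCast.mpr hds) k)
      have hmd : ((m : ℤ) : ZMod d) = 0 := (ZMod.intCast_zmod_eq_zero_iff_dvd m d).mpr hdm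
      have := htr
      rw [hco] at this
      rw [map_add, hsk, add_zero] at this
      rw [this, hmd]
    exact hQ b' hb'star (cBf B b') hc' hdc' hzero
  exact interior_maximal hUW hUopen hgkU

/-- MAIN equivalence. -/
lemma perWu_iff_goodq (hB : 0 ∉ B) (K : ℕ) (h : Hgp B) (n : ℤ) :
    (∀ k : ℤ, h + DeltaH B (n + (lcmBstarK B K : ℤ) * k) ∈ Wu B) ↔ GoodQ B K h n := by
  constructor
  · intro hall b' hb' c hc hdc
    by_contra h0
    set s : ℕ := lcmBstarK B K with hs
    set d : ℕ := Nat.gcd s b' with hd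
    have hc₂B : cBf B b' ∈ B := cBf_memB (Bstar_subset_union hb')
    have hb'c₂ : b' ∣ cBf B b' := cBf_dvd (Bstar_subset_union hb')
    set T : Finset ℕ := {c, cBf B b'} with hT
    have hTB : ∀ b ∈ T, b ∈ B := by
      intro b hb
      rw [hT, Finset.mem_insert, Finset.mem_singleton] at hb
      rcases hb with rfl | rfl
      · exact hc
      · exact hc₂B
    obtain ⟨m, hm⟩ := approx (h + DeltaH B n) T hTB
    have hdm : (d : ℤ) ∣ m := by
      have h1 : (m : ZMod c) = ((h + DeltaH B n : Hgp B) : Gr B) ⟨c, hc⟩ :=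
        hm c (by rw [hT]; exact Finset.mem_insert_self _ _) hc
      have h2 : ((m : ℤ) : ZMod d) = 0 := by
        have := congrArg (ZMod.castHom hdc (ZMod d)) h1
        rwa [map_intCast, h0] at this
      exact (ZMod.intCast_zmod_eq_zero_iff_dvd m d).mp h2
    obtain ⟨t, ht⟩ := bezout_ap m s b' hdm
    have hwu := hall t
    have hne := wu_cast_ne hB (Bstar_subset_union hb') hc₂B hb'c₂ hwu
    apply hne
    have hco : ((h + DeltaH B (n + (s:ℤ)*t) : Hgp B) : Gr B) ⟨cBf B b', hc₂B⟩
        = ((m + (s:ℤ)*t : ℤ) : ZMod (cBf B b')) := by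
      have hsplit : h + DeltaH B (n + (s:ℤ)*t) = (h + DeltaH B n) + DeltaH B ((s:ℤ)*t) := by
        rw [DeltaH_add, add_assoc]
      have h1 : (m : ZMod (cBf B b')) = ((h + DeltaH B n : Hgp B) : Gr B) ⟨cBf B b', hc₂B⟩ :=
        hm (cBf B b') (by rw [hT]; exact Finset.mem_insert_of_mem (Finset.mem_singleton_self _)) hc₂B
      rw [hsplit]
      show ((h + DeltaH B n : Hgp B) : Gr B) ⟨cBf B b', hc₂B⟩ + (((s:ℤ)*t : ℤ) : ZMod (cBf B b'))
        = ((m + (s:ℤ)*t : ℤ) : ZMod (cBf B b'))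
      rw [← h1]
      push_cast
      ring
    rw [hco, map_intCast]
    exact (ZMod.intCast_zmod_eq_zero_iff_dvd _ _).mpr ht
  · intro hQ k
    exact subset_closure (mem_intW_of_goodq hB K h n hQ k)

variable {B : Set ℕ}

lemma ite_bool_iff (P : Prop) [Decidable P] : (if P then true else false) = true ↔ P := by
  split <;> simp_all

lemma bool_eq_of_iff {a b : Bool} (h : (a = true) ↔ (b = true)) : a = b := by
  cases a <;> cases b <;> simp_all

lemma phiu_eq_true_iff (h : Hgp B) (n : ℤ) :
    phiu B h n = true ↔ h + DeltaH B n ∈ Wu B := by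
  simp only [phiu]
  exact ite_bool_iff _

lemma phiuK_true_iff (K : ℕ) (h : Hgp B) (n : ℤ) :
    phiuK B K h n = true ↔ ∀ k : ℤ, h + DeltaH B (n + (lcmBstarK B K : ℤ) * k) ∈ Wu B := by
  simp only [phiuK]
  by_cases hper : n ∈ Per (phiu B h) (lcmBstarK B K)
  · rw [if_pos hper]
    constructor
    · intro htrue k
      have hk := hper k
      rw [htrue] at hk
      exact (phiu_eq_true_iff h _).mp hk
    · intro hall
      have := hall 0
      simp only [mul_zero, add_zero] at this
      exact (phiu_eq_true_iff h n).mpr this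
  · rw [if_neg hper]
    constructor
    · intro hft; exact absurd hft (by simp)
    · intro hall
      exfalso
      apply hper
      intro k
      have h1 : phiu B h (n + (lcmBstarK B K : ℤ) * k) = true := (phiu_eq_true_iff h _).mpr (hall k)
      have h2 : phiu B h n = true := by
        have := hall 0
        simp only [mul_zero, add_zero] at this
        exact (phiu_eq_true_iff h n).mpr this
      rw [h1, h2]

lemma goodq_iff_int (K : ℕ) (h : Hgp B) (n : ℤ) (m : ℤ)
    (hm : ∀ β (hβ : β ∈ BKfin (Bstar B) K),
      ((m : ZMod (cBf B β)) = ((h + DeltaH B n : Hgp B) : Gr B) ⟨cBf B β, cBf_memB (mem_Tf_union hβ)⟩)) :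
    GoodQ B K h n ↔ ∀ b' ∈ Bstar B, ((m : ℤ) : ZMod (Nat.gcd (lcmBstarK B K) b')) ≠ 0 := by
  constructor
  · intro hQ b' hb'
    have hdc' : Nat.gcd (lcmBstarK B K) b' ∣ cBf B b' :=
      dvd_trans (Nat.gcd_dvd_right _ _) (cBf_dvd (Bstar_subset_union hb'))
    have htr := castd_eq K (h + DeltaH B n) m hm (Nat.gcd_dvd_left _ _)
      (cBf_memB (Bstar_subset_union hb')) hdc'
    rw [← htr]
    exact hQ b' hb' (cBf B b') (cBf_memB (Bstar_subset_union hb')) hdc'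
  · intro hm' b' hb' c hc hdc
    have htr := castd_eq K (h + DeltaH B n) m hm (Nat.gcd_dvd_left _ _) hc hdc
    rw [htr]
    exact hm' b' hb'

lemma goodq_congr (K : ℕ) (h₁ h₂ : Hgp B) (n : ℤ)
    (hagree : ∀ β (hβ : β ∈ BKfin (Bstar B) K),
      (h₁ : Gr B) ⟨cBf B β, cBf_memB (mem_Tf_union hβ)⟩
        = (h₂ : Gr B) ⟨cBf B β, cBf_memB (mem_Tf_union hβ)⟩) :
    GoodQ B K h₁ n ↔ GoodQ B K h₂ n := by
  classical
  set F2 : Finset ℕ := (BKfin (Bstar B) K).image (cBf B) with hF2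
  have hF2B : ∀ b ∈ F2, b ∈ B := by
    intro b hb
    rw [hF2, Finset.mem_image] at hb
    obtain ⟨β, hβ, rfl⟩ := hb
    exact cBf_memB (mem_Tf_union hβ)
  obtain ⟨m₁, hm₁⟩ := approx (h₁ + DeltaH B n) F2 hF2B
  obtain ⟨m₂, hm₂⟩ := approx (h₂ + DeltaH B n) F2 hF2B
  have hm₁' : ∀ β (hβ : β ∈ BKfin (Bstar B) K),
      ((m₁ : ZMod (cBf B β)) = ((h₁ + DeltaH B n : Hgp B) : Gr B) ⟨cBf B β, cBf_memB (mem_Tf_union hβ)⟩) :=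
    fun β hβ => hm₁ (cBf B β) (by rw [hF2]; exact Finset.mem_image_of_mem _ hβ) _
  have hm₂' : ∀ β (hβ : β ∈ BKfin (Bstar B) K),
      ((m₂ : ZMod (cBf B β)) = ((h₂ + DeltaH B n : Hgp B) : Gr B) ⟨cBf B β, cBf_memB (mem_Tf_union hβ)⟩) :=
    fun β hβ => hm₂ (cBf B β) (by rw [hF2]; exact Finset.mem_image_of_mem _ hβ) _
  have hdvd : ∀ β ∈ BKfin (Bstar B) K, (β : ℤ) ∣ m₁ - m₂ := by
    intro β hβ
    have h1 : (m₁ : ZMod (cBf B β)) = (m₂ : ZMod (cBf B β)) := by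
      rw [hm₁' β hβ, hm₂' β hβ, coord_add_delta, coord_add_delta, hagree β hβ]
    exact dvd_trans (Int.natCast_dvd_natCast.mpr (cBf_dvd (mem_Tf_union hβ)))
      (int_dvd_sub_of_cast_eq h1)
  have hs : ((lcmBstarK B K : ℕ) : ℤ) ∣ m₁ - m₂ := by
    rw [lcmBstarK]; exact dvd_int_of_forall_dvd hdvd
  have hcast : ∀ b' ∈ Bstar B,
      ((m₁ : ℤ) : ZMod (Nat.gcd (lcmBstarK B K) b')) = ((m₂ : ℤ) : ZMod (Nat.gcd (lcmBstarK B K) b')) := by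
    intro b' hb'
    exact cast_eq_of_int_dvd (dvd_trans (Int.natCast_dvd_natCast.mpr (Nat.gcd_dvd_left _ _)) hs)
  rw [goodq_iff_int K h₁ n m₁ hm₁', goodq_iff_int K h₂ n m₂ hm₂']
  constructor
  · intro H b' hb'; rw [← hcast b' hb']; exact H b' hb'
  · intro H b' hb'; rw [hcast b' hb']; exact H b' hb'

lemma phiuK_eq_goodq (hB : 0 ∉ B) (K : ℕ) (h : Hgp B) (n : ℤ) :
    phiuK B K h n = true ↔ GoodQ B K h n := by
  rw [phiuK_true_iff, perWu_iff_goodq hB]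

lemma continuous_of_det (F : Finset ℕ) (hF : ∀ b ∈ F, b ∈ B) (φ : Hgp B → (ℤ → Bool))
    (hdet : ∀ h₁ h₂ : Hgp B,
      (∀ b (hb : b ∈ B), b ∈ F → (h₁ : Gr B) ⟨b, hb⟩ = (h₂ : Gr B) ⟨b, hb⟩) → φ h₁ = φ h₂) :
    Continuous φ := by
  apply IsLocallyConstant.continuous
  intro sset
  rw [isOpen_iff_forall_mem_open]
  intro h hh
  refine ⟨⋂ i : {b // b ∈ F},
    {h' : Hgp B | (h' : Gr B) ⟨i.1, hF i.1 i.2⟩ = (h : Gr B) ⟨i.1, hF i.1 i.2⟩}, ?_, ?_, ?_⟩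
  · intro h' hh'
    have heq : φ h' = φ h := by
      apply hdet
      intro b hb hbF
      exact Set.mem_iInter.mp hh' ⟨b, hbF⟩
    show φ h' ∈ sset
    rw [heq]
    exact hh
  · apply isOpen_iInter_of_finite
    intro i
    have : {h' : Hgp B | (h' : Gr B) ⟨i.1, hF i.1 i.2⟩ = (h : Gr B) ⟨i.1, hF i.1 i.2⟩}
        = (fun h' : Hgp B => (h' : Gr B) ⟨i.1, hF i.1 i.2⟩) ⁻¹'
          {(h : Gr B) ⟨i.1, hF i.1 i.2⟩} := rfl
    rw [this]
    exact (coord_continuous _).isOpen_preimage _ (isOpen_discrete _)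
  · exact Set.mem_iInter.mpr (fun i => rfl)

end Statement12Aux

/-- for each `K ≥ 1`, the maps `φ_K` and `φ̲_K` depend only on
finitely many coordinates, and in particular they are continuous. -/
theorem statement12 (B : Set ℕ) (hB : 0 ∉ B) (K : ℕ) (hK : 1 ≤ K) :
    (∃ F : Finset ℕ, ↑F ⊆ B ∧
      ∀ h₁ h₂ : Hgp B,
        (∀ (b : ℕ) (hb : b ∈ B), b ∈ F → (h₁ : Gr B) ⟨b, hb⟩ = (h₂ : Gr B) ⟨b, hb⟩) →
          phiK B K h₁ = phiK B K h₂ ∧ phiuK B K h₁ = phiuK B K h₂) ∧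
    Continuous (phiK B K) ∧ Continuous (phiuK B K) := by
  classical
  set F : Finset ℕ := (BKfin B K) ∪ ((BKfin (Bstar B) K).image (cBf B)) with hF
  have hFB : ∀ b ∈ F, b ∈ B := by
    intro b hb
    rw [hF, Finset.mem_union] at hb
    rcases hb with hb | hb
    · exact (mem_BKfin_iff.mp hb).2
    · obtain ⟨β, hβ, rfl⟩ := Finset.mem_image.mp hb
      exact cBf_memB (mem_Tf_union hβ)
  have hdet : ∀ h₁ h₂ : Hgp B,
      (∀ (b : ℕ) (hb : b ∈ B), b ∈ F → (h₁ : Gr B) ⟨b, hb⟩ = (h₂ : Gr B) ⟨b, hb⟩) →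
      phiK B K h₁ = phiK B K h₂ ∧ phiuK B K h₁ = phiuK B K h₂ := by
    intro h₁ h₂ hagree
    constructor
    · -- phiK
      funext n
      apply bool_eq_of_iff
      simp only [phiK]
      rw [ite_bool_iff, ite_bool_iff]
      have hcoord : ∀ (b : ℕ) (hb : b ∈ B), b ≤ K →
          ((h₁ + DeltaH B n : Hgp B) : Gr B) ⟨b, hb⟩ = ((h₂ + DeltaH B n : Hgp B) : Gr B) ⟨b, hb⟩ := by
        intro b hb hbK
        have hbF : b ∈ F := by
          rw [hF, Finset.mem_union]
          left
          exact mem_BKfin_iff.mpr ⟨⟨Nat.pos_of_ne_zero (fun h => hB (h ▸ hb)), hbK⟩, hb⟩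
        rw [coord_add_delta, coord_add_delta, hagree b hb hbF]
      constructor
      · intro H b hb hbK
        rw [← hcoord b hb hbK]
        exact H b hb hbK
      · intro H b hb hbK
        rw [hcoord b hb hbK]
        exact H b hb hbK
    · -- phiuK
      funext n
      apply bool_eq_of_iff
      rw [phiuK_eq_goodq hB, phiuK_eq_goodq hB]
      apply goodq_congr
      intro β hβ
      apply hagree
      rw [hF, Finset.mem_union]
      right
      exact Finset.mem_image_of_mem _ hβ
  refine ⟨⟨F, ?_, hdet⟩, ?_, ?_⟩
  · intro b hb
    exact hFB b hb
  · exact continuous_of_det F hFB _ (fun h₁ h₂ hag => (hdet h₁ h₂ hag).1)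
  · exact continuous_of_det F hFB _ (fun h₁ h₂ hag => (hdet h₁ h₂ hag).2)


end BFree
end
end

section
/- Let 𝒜 be a finite alphabet, let (ℓ_i) ⊆ ℕ be an increasing sequence, and let x_K ∈ 𝒜^ℤ for K ≥ 1 and x ∈ 𝒜^ℤ satisfy lim_{K→∞} limsup_{i→∞} (1/ℓ_i)|{n ∈ [1,ℓ_i] : x_K(n) ≠ x(n)}| = 0. Suppose each x_K is quasi-generic along (ℓ_i) for a measure ν_K and x is quasi-generic along (ℓ_i) for a measure ν (i.e., (1/ℓ_i) Σ_{n=1}^{ℓ_i} δ_{σⁿ x_K} → ν_K and (1/ℓ_i) Σ_{n=1}^{ℓ_i} δ_{σⁿ x} → ν weakly, where σ is the left shift on 𝒜^ℤ). Then ν_K → ν in the weak topology. -/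
open MeasureTheory Filter Topology
open scoped Classical

noncomputable section
namespace BFree

/-- modulus of uniform continuity via cylinders -/
lemma cylinder_lemma (A : Type) [Fintype A] [TopologicalSpace A] [DiscreteTopology A]
    (f : C((ℤ → A), ℝ)) {ε : ℝ} (hε : 0 < ε) :
    ∃ S : Finset ℤ, ∀ u v : ℤ → A, (∀ m ∈ S, u m = v m) → |f u - f v| < ε := by
  have hcyl : ∀ u : ℤ → A, ∃ S : Finset ℤ,
      {v : ℤ → A | ∀ m ∈ S, v m = u m} ⊆ f ⁻¹' Metric.ball (f u) (ε / 2) := by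
    intro u
    have h1 : f ⁻¹' Metric.ball (f u) (ε / 2) ∈ 𝓝 u :=
      f.continuous.continuousAt (Metric.ball_mem_nhds _ (by positivity))
    rw [nhds_pi, Filter.mem_pi] at h1
    obtain ⟨I, hIfin, t, ht, hsub⟩ := h1
    refine ⟨hIfin.toFinset, fun v hv => hsub ?_⟩
    intro m hm
    have hvm : v m = u m := hv m (hIfin.mem_toFinset.mpr hm)
    rw [hvm]
    exact mem_of_mem_nhds (ht m)
  choose S hSsub using hcyl
  have hopen : ∀ u : ℤ → A, IsOpen {v : ℤ → A | ∀ m ∈ S u, v m = u m} := by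
    intro u
    have heq : {v : ℤ → A | ∀ m ∈ S u, v m = u m}
        = Set.pi (S u : Set ℤ) (fun m => {u m}) := by
      ext v; simp [Set.mem_pi]
    rw [heq]
    exact isOpen_set_pi (S u).finite_toSet (fun m _ => isOpen_discrete _)
  have hcover : (Set.univ : Set (ℤ → A)) ⊆ ⋃ u, {v : ℤ → A | ∀ m ∈ S u, v m = u m} :=
    fun u _ => Set.mem_iUnion.mpr ⟨u, fun m _ => rfl⟩
  obtain ⟨F, hF⟩ := isCompact_univ.elim_finite_subcover _ hopen hcover
  refine ⟨F.sup S, fun u v huv => ?_⟩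
  have hu := hF (Set.mem_univ u)
  simp only [Set.mem_iUnion, Set.mem_setOf_eq] at hu
  obtain ⟨w, hwF, hw⟩ := hu
  have hsub' : S w ⊆ F.sup S := Finset.le_sup hwF
  have hvw : ∀ m ∈ S w, v m = w m := fun m hm => by
    rw [← huv m (hsub' hm)]; exact hw m hm
  have h1 : dist (f u) (f w) < ε / 2 := hSsub w hw
  have h2 : dist (f v) (f w) < ε / 2 := hSsub w hvw
  rw [Real.dist_eq] at h1 h2
  calc |f u - f v| ≤ |f u - f w| + |f w - f v| := abs_sub_le _ _ _
    _ = |f u - f w| + |f v - f w| := by rw [abs_sub_comm (f w)]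
    _ < ε / 2 + ε / 2 := by linarith
    _ = ε := by ring

lemma sum_nat_int (g : ℤ → ℝ) (L : ℕ) :
    ∑ n ∈ Finset.Icc 1 L, g (n : ℤ) = ∑ j ∈ Finset.Icc (1:ℤ) (L:ℤ), g j := by
  have himg : (Finset.Icc 1 L).map Nat.castEmbedding = Finset.Icc (1:ℤ) (L:ℤ) := by
    ext j
    simp only [Finset.mem_map, Finset.mem_Icc, Nat.castEmbedding_apply]
    constructor
    · rintro ⟨n, ⟨h1, h2⟩, rfl⟩; omega
    · rintro ⟨h1, h2⟩; exact ⟨j.toNat, ⟨by omega, by omega⟩, by omega⟩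
  rw [← himg, Finset.sum_map]
  rfl

lemma sum_shift_le (g : ℤ → ℝ) (hg0 : ∀ j, 0 ≤ g j) (hg1 : ∀ j, g j ≤ 1) (m : ℤ) (L : ℕ) :
    ∑ j ∈ Finset.Icc (m + 1) (m + (L:ℤ)), g j
      ≤ (∑ j ∈ Finset.Icc (1:ℤ) (L:ℤ), g j) + (m.natAbs : ℝ) := by
  set T := Finset.Icc (m + 1) (m + (L:ℤ))
  have hsplit : ∑ j ∈ T, g j
      = (∑ j ∈ T ∩ Finset.Icc (1:ℤ) (L:ℤ), g j) + ∑ j ∈ T \ Finset.Icc (1:ℤ) (L:ℤ), g j :=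
    (Finset.sum_inter_add_sum_sdiff T _ g).symm
  rw [hsplit]
  have h1 : ∑ j ∈ T ∩ Finset.Icc (1:ℤ) (L:ℤ), g j ≤ ∑ j ∈ Finset.Icc (1:ℤ) (L:ℤ), g j :=
    Finset.sum_le_sum_of_subset_of_nonneg Finset.inter_subset_right (fun j _ _ => hg0 j)
  have h2 : ∑ j ∈ T \ Finset.Icc (1:ℤ) (L:ℤ), g j ≤ (m.natAbs : ℝ) := by
    have hsub : T \ Finset.Icc (1:ℤ) (L:ℤ)
        ⊆ Finset.Icc (m + 1) 0 ∪ Finset.Icc ((L:ℤ) + 1) (m + (L:ℤ)) := by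
      intro j hj
      simp only [Finset.mem_sdiff, Finset.mem_Icc, T] at hj
      simp only [Finset.mem_union, Finset.mem_Icc]
      omega
    calc ∑ j ∈ T \ Finset.Icc (1:ℤ) (L:ℤ), g j
        ≤ ∑ _j ∈ T \ Finset.Icc (1:ℤ) (L:ℤ), (1:ℝ) := Finset.sum_le_sum (fun j _ => hg1 j)
      _ = ((T \ Finset.Icc (1:ℤ) (L:ℤ)).card : ℝ) := by simp
      _ ≤ (m.natAbs : ℝ) := by
          have hcard := Finset.card_le_card hsub
          have hcard2 := Finset.card_union_le (Finset.Icc (m + 1) 0)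
            (Finset.Icc ((L:ℤ) + 1) (m + (L:ℤ)))
          rw [Int.card_Icc, Int.card_Icc] at hcard2
          have : (T \ Finset.Icc (1:ℤ) (L:ℤ)).card ≤ m.natAbs := by omega
          exact_mod_cast this
  linarith
/-- let `𝒜` be a finite alphabet and `(ℓ_i)` an increasing
sequence. If `x_K` and `x` satisfy
`lim_K limsup_i (1/ℓ_i)|{n ∈ [1,ℓ_i] : x_K(n) ≠ x(n)}| = 0`, each `x_K` is
quasi-generic along `(ℓ_i)` for `ν_K`, and `x` is quasi-generic along `(ℓ_i)`
for `ν`, then `ν_K → ν` weakly. -/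
theorem statement15 (A : Type) [Fintype A] [TopologicalSpace A] [DiscreteTopology A]
    [MeasurableSpace A] [BorelSpace A]
    (ℓ : ℕ → ℕ) (hmono : StrictMono ℓ)
    (xK : ℕ → ℤ → A) (x : ℤ → A)
    (νK : ℕ → Measure (ℤ → A)) (ν : Measure (ℤ → A))
    (hνK : ∀ K, IsProbabilityMeasure (νK K)) (hν : IsProbabilityMeasure ν)
    (hdiff : Tendsto
      (fun K : ℕ => atTop.limsup fun i : ℕ =>
        (∑ n ∈ Finset.Icc (1:ℤ) (ℓ i : ℤ), if xK K n ≠ x n then (1:ℝ) else 0) / (ℓ i : ℝ))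
      atTop (𝓝 0))
    (hqgK : ∀ K, ∀ f : C((ℤ → A), ℝ),
      Tendsto
        (fun i => (∑ n ∈ Finset.Icc 1 (ℓ i), f (fun m => xK K (m + (n:ℤ)))) / (ℓ i : ℝ))
        atTop (𝓝 (∫ y, f y ∂(νK K))))
    (hqgx : ∀ f : C((ℤ → A), ℝ),
      Tendsto
        (fun i => (∑ n ∈ Finset.Icc 1 (ℓ i), f (fun m => x (m + (n:ℤ)))) / (ℓ i : ℝ))
        atTop (𝓝 (∫ y, f y ∂ν))) :
    ∀ f : C((ℤ → A), ℝ),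
      Tendsto (fun K => ∫ y, f y ∂(νK K)) atTop (𝓝 (∫ y, f y ∂ν)) := by
  intro f
  rw [Metric.tendsto_atTop]
  intro ε hε
  obtain ⟨S, hS⟩ := cylinder_lemma A f (show (0:ℝ) < ε / 4 by positivity)
  set C : ℝ := ∑ m ∈ S, (m.natAbs : ℝ) with hCdef
  have hC0 : 0 ≤ C := Finset.sum_nonneg fun m _ => by positivity
  have hc0 : (0:ℝ) ≤ 2 * ‖f‖ * S.card := by positivity
  set δ : ℝ := ε / (4 * (2 * ‖f‖ * S.card + 1)) with hδdef
  have hδ : 0 < δ := by rw [hδdef]; positivity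
  have hev : ∀ᶠ K in atTop, (atTop.limsup fun i : ℕ =>
      (∑ n ∈ Finset.Icc (1:ℤ) (ℓ i : ℤ), if xK K n ≠ x n then (1:ℝ) else 0) / (ℓ i : ℝ)) < δ :=
    hdiff.eventually (gt_mem_nhds hδ)
  rw [eventually_atTop] at hev
  obtain ⟨N, hN⟩ := hev
  refine ⟨N, fun K hK => ?_⟩
  have hbddD : Filter.IsBoundedUnder (· ≤ ·) atTop (fun i : ℕ =>
      (∑ n ∈ Finset.Icc (1:ℤ) (ℓ i : ℤ), if xK K n ≠ x n then (1:ℝ) else 0) / (ℓ i : ℝ)) := by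
    refine isBoundedUnder_of ⟨1, fun i => ?_⟩
    rcases eq_or_lt_of_le (Nat.cast_nonneg (α := ℝ) (ℓ i)) with h | h
    · simp [← h]
    · rw [div_le_one h]
      have hcard : (Finset.Icc (1:ℤ) (ℓ i : ℤ)).card = ℓ i := by
        rw [Int.card_Icc]; omega
      calc (∑ n ∈ Finset.Icc (1:ℤ) (ℓ i : ℤ), if xK K n ≠ x n then (1:ℝ) else 0)
          ≤ ∑ _n ∈ Finset.Icc (1:ℤ) (ℓ i : ℤ), (1:ℝ) :=
            Finset.sum_le_sum fun n _ => by split <;> norm_num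
        _ = ((Finset.Icc (1:ℤ) (ℓ i : ℤ)).card : ℝ) := by simp
        _ = (ℓ i : ℝ) := by rw [hcard]
  have hDev := eventually_lt_of_limsup_lt (hN K hK) hbddD
  have hℓtop : Tendsto (fun i => (ℓ i : ℝ)) atTop atTop :=
    tendsto_natCast_atTop_atTop.comp hmono.tendsto_atTop
  have hCev : ∀ᶠ i in atTop, 2 * ‖f‖ * C / (ℓ i : ℝ) < ε / 4 :=
    (tendsto_const_nhds.div_atTop hℓtop).eventually (gt_mem_nhds (by positivity))
  have hℓ1 : ∀ᶠ i in atTop, 1 ≤ ℓ i := hmono.tendsto_atTop.eventually_ge_atTop 1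
  have hbound : ∀ᶠ i in atTop,
      |(∑ n ∈ Finset.Icc 1 (ℓ i), f (fun m => xK K (m + (n:ℤ)))) / (ℓ i : ℝ)
        - (∑ n ∈ Finset.Icc 1 (ℓ i), f (fun m => x (m + (n:ℤ)))) / (ℓ i : ℝ)|
      ≤ ε / 4 + 2 * ‖f‖ * S.card * δ + ε / 4 := by
    filter_upwards [hDev, hCev, hℓ1] with i hD hC2 h1
    have hLpos : (0:ℝ) < (ℓ i : ℝ) := by exact_mod_cast Nat.lt_of_lt_of_le Nat.zero_lt_one h1
    set L := ℓ i with hLdef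
    set E : ℝ := ∑ n ∈ Finset.Icc (1:ℤ) (L:ℤ), if xK K n ≠ x n then (1:ℝ) else 0 with hEdef
    have hE0 : 0 ≤ E := Finset.sum_nonneg fun n _ => by split <;> norm_num
    -- pointwise bound
    have hpt : ∀ n ∈ Finset.Icc 1 L,
        |f (fun m => xK K (m + (n:ℤ))) - f (fun m => x (m + (n:ℤ)))|
        ≤ ε / 4 + 2 * ‖f‖ *
            ∑ m ∈ S, (if xK K (m + (n:ℤ)) ≠ x (m + (n:ℤ)) then (1:ℝ) else 0) := by
      intro n _
      have hg0 : (0:ℝ) ≤ ∑ m ∈ S, (if xK K (m + (n:ℤ)) ≠ x (m + (n:ℤ)) then (1:ℝ) else 0) :=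
        Finset.sum_nonneg fun m _ => by split <;> norm_num
      by_cases hall : ∀ m ∈ S, xK K (m + (n:ℤ)) = x (m + (n:ℤ))
      · have h := hS _ _ hall
        nlinarith [norm_nonneg f]
      · push_neg at hall
        obtain ⟨m0, hm0S, hm0⟩ := hall
        have h1g : (1:ℝ) ≤ ∑ m ∈ S, (if xK K (m + (n:ℤ)) ≠ x (m + (n:ℤ)) then (1:ℝ) else 0) := by
          have hsingle := Finset.single_le_sum
            (f := fun m => (if xK K (m + (n:ℤ)) ≠ x (m + (n:ℤ)) then (1:ℝ) else 0))
            (fun m _ => by split <;> norm_num) hm0S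
          rw [if_pos hm0] at hsingle
          exact hsingle
        have h2 : |f (fun m => xK K (m + (n:ℤ))) - f (fun m => x (m + (n:ℤ)))| ≤ 2 * ‖f‖ := by
          have hns := norm_sub_le (f (fun m => xK K (m + (n:ℤ)))) (f (fun m => x (m + (n:ℤ))))
          have hu := f.norm_coe_le_norm (fun m => xK K (m + (n:ℤ)))
          have hv := f.norm_coe_le_norm (fun m => x (m + (n:ℤ)))
          rw [← Real.norm_eq_abs]
          linarith
        nlinarith [norm_nonneg f]
    -- sum of windows bound
    have hsum : ∑ n ∈ Finset.Icc 1 L,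
        ∑ m ∈ S, (if xK K (m + (n:ℤ)) ≠ x (m + (n:ℤ)) then (1:ℝ) else 0)
        ≤ S.card * E + C := by
      rw [Finset.sum_comm]
      have hterm : ∀ m ∈ S,
          ∑ n ∈ Finset.Icc 1 L, (if xK K (m + (n:ℤ)) ≠ x (m + (n:ℤ)) then (1:ℝ) else 0)
          ≤ E + (m.natAbs : ℝ) := by
        intro m _
        have hconv := sum_nat_int (fun j => if xK K (m + j) ≠ x (m + j) then (1:ℝ) else 0) L
        rw [hconv]
        have hmap : ∑ j ∈ Finset.Icc (1:ℤ) (L:ℤ),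
              (if xK K (m + j) ≠ x (m + j) then (1:ℝ) else 0)
            = ∑ j ∈ Finset.Icc (m + 1) (m + (L:ℤ)),
              (if xK K j ≠ x j then (1:ℝ) else 0) := by
          rw [← Finset.map_add_left_Icc, Finset.sum_map]
          rfl
        rw [hmap]
        exact sum_shift_le _ (fun j => by split <;> norm_num) (fun j => by split <;> norm_num) m L
      calc ∑ m ∈ S, ∑ n ∈ Finset.Icc 1 L,
            (if xK K (m + (n:ℤ)) ≠ x (m + (n:ℤ)) then (1:ℝ) else 0)
          ≤ ∑ m ∈ S, (E + (m.natAbs : ℝ)) := Finset.sum_le_sum hterm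
        _ = S.card * E + C := by
            rw [Finset.sum_add_distrib, Finset.sum_const, nsmul_eq_mul]
    have hcardL : (Finset.Icc 1 L).card = L := by rw [Nat.card_Icc]; omega
    have hpt' : ∀ n ∈ Finset.Icc 1 L,
        |f (fun m => xK K (m + (n:ℤ))) - f (fun m => x (m + (n:ℤ)))|
        ≤ ε / 4 + 2 * ‖f‖ *
            ∑ m ∈ S, (if xK K (m + (n:ℤ)) ≠ x (m + (n:ℤ)) then (1:ℝ) else 0) := hpt
    have hnum : |∑ n ∈ Finset.Icc 1 L,
          (f (fun m => xK K (m + (n:ℤ))) - f (fun m => x (m + (n:ℤ))))|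
        ≤ L * (ε / 4) + 2 * ‖f‖ * (S.card * E + C) := by
      calc |∑ n ∈ Finset.Icc 1 L,
            (f (fun m => xK K (m + (n:ℤ))) - f (fun m => x (m + (n:ℤ))))|
          ≤ ∑ n ∈ Finset.Icc 1 L,
            |f (fun m => xK K (m + (n:ℤ))) - f (fun m => x (m + (n:ℤ)))| :=
            Finset.abs_sum_le_sum_abs _ _
        _ ≤ ∑ n ∈ Finset.Icc 1 L, (ε / 4 + 2 * ‖f‖ *
              ∑ m ∈ S, (if xK K (m + (n:ℤ)) ≠ x (m + (n:ℤ)) then (1:ℝ) else 0)) :=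
            Finset.sum_le_sum hpt'
        _ = L * (ε / 4) + 2 * ‖f‖ * ∑ n ∈ Finset.Icc 1 L,
              ∑ m ∈ S, (if xK K (m + (n:ℤ)) ≠ x (m + (n:ℤ)) then (1:ℝ) else 0) := by
            rw [Finset.sum_add_distrib, Finset.sum_const, hcardL, nsmul_eq_mul,
              ← Finset.mul_sum]
        _ ≤ L * (ε / 4) + 2 * ‖f‖ * (S.card * E + C) := by
            have := mul_le_mul_of_nonneg_left hsum (by positivity : (0:ℝ) ≤ 2 * ‖f‖)
            linarith
    calc |(∑ n ∈ Finset.Icc 1 L, f (fun m => xK K (m + (n:ℤ)))) / (L : ℝ)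
          - (∑ n ∈ Finset.Icc 1 L, f (fun m => x (m + (n:ℤ)))) / (L : ℝ)|
        = |∑ n ∈ Finset.Icc 1 L,
            (f (fun m => xK K (m + (n:ℤ))) - f (fun m => x (m + (n:ℤ))))| / (L : ℝ) := by
          rw [div_sub_div_same, ← Finset.sum_sub_distrib, abs_div, abs_of_pos hLpos]
      _ ≤ (L * (ε / 4) + 2 * ‖f‖ * (S.card * E + C)) / (L : ℝ) :=
          (div_le_div_iff_of_pos_right hLpos).mpr hnum
      _ = ε / 4 + 2 * ‖f‖ * S.card * (E / (L : ℝ)) + 2 * ‖f‖ * C / (L : ℝ) := by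
          field_simp
          ring
      _ ≤ ε / 4 + 2 * ‖f‖ * S.card * δ + ε / 4 := by
          have h2 : 2 * ‖f‖ * S.card * (E / (L : ℝ)) ≤ 2 * ‖f‖ * S.card * δ :=
            mul_le_mul_of_nonneg_left hD.le hc0
          linarith
  have htend : Tendsto (fun i =>
      |(∑ n ∈ Finset.Icc 1 (ℓ i), f (fun m => xK K (m + (n:ℤ)))) / (ℓ i : ℝ)
        - (∑ n ∈ Finset.Icc 1 (ℓ i), f (fun m => x (m + (n:ℤ)))) / (ℓ i : ℝ)|) atTop
      (𝓝 |(∫ y, f y ∂(νK K)) - ∫ y, f y ∂ν|) := ((hqgK K f).sub (hqgx f)).abs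
  have hle : |(∫ y, f y ∂(νK K)) - ∫ y, f y ∂ν| ≤ ε / 4 + 2 * ‖f‖ * S.card * δ + ε / 4 :=
    le_of_tendsto htend hbound
  have hcδ : 2 * ‖f‖ * S.card * δ < ε / 4 := by
    rw [hδdef, mul_div_assoc']
    rw [div_lt_div_iff₀ (by positivity) (by norm_num : (0:ℝ) < 4)]
    nlinarith [hc0, hε]
  rw [Real.dist_eq]
  linarith

end BFree
end
end

section
/- Let Y := {x ∈ {0,1}^ℤ : |supp x mod b| = b − 1 for every b ∈ 𝓑} and for y ∈ Y let θ(y) ∈ G be defined by: θ(y)_b is the unique residue class mod b with supp y ∩ (bℤ − θ(y)_b) = ∅. Let X̃_φ := {z ∈ {0,1}^ℤ : z ≤ x coordinatewise for some x ∈ X_φ} denote the hereditary closure of X_φ. Then θ(Y ∩ X̃_φ) = θ(Y ∩ X_φ) ⊆ H; in particular, θ(x) ∈ H for every x ∈ Y ∩ X_φ. -/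
open MeasureTheory Filter Topology
open scoped Classical

noncomputable section
namespace BFree


/-- The support of `x ∈ {0,1}^ℤ`. -/
def suppSet (x : ℤ → Bool) : Set ℤ := {n | x n = true}

/-- `Y = {x : |supp x mod b| = b − 1 for every b ∈ 𝓑}`. -/
def Yset (B : Set ℕ) : Set (ℤ → Bool) :=
  {y | ∀ b : B, Set.ncard {r : ZMod (b:ℕ) | ∃ n ∈ suppSet y, (n : ZMod (b:ℕ)) = r} = (b:ℕ) - 1}

/-- The hereditary closure of a subset of `{0,1}^ℤ`. -/
def heredClosure (X : Set (ℤ → Bool)) : Set (ℤ → Bool) := {z | ∃ x ∈ X, ∀ n, z n ≤ x n}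

lemma phi_eq_true_iff (B : Set ℕ) (h : Hgp B) (n : ℤ) :
    phi B h n = true ↔ ∀ b : B, (h : Gr B) b + (n : ZMod (b:ℕ)) ≠ 0 := by
  rw [phi]
  split_ifs with hw
  · simp only [true_iff]
    intro b
    exact hw b
  · simp only [Bool.false_eq_true, false_iff, not_forall, not_not]
    by_contra hc
    push_neg at hc
    exact hw fun b => hc b

lemma approx_lemma (B : Set ℕ) {x : ℤ → Bool} (hx : x ∈ Xphi B)
    {N : Set ℤ} (hN : N.Finite) :
    ∃ h : Hgp B, ∀ n ∈ N, phi B h n = x n := by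
  have hopen : IsOpen {z : ℤ → Bool | ∀ n ∈ N, z n = x n} := by
    have he : {z : ℤ → Bool | ∀ n ∈ N, z n = x n}
        = ⋂ n ∈ N, (fun z : ℤ → Bool => z n) ⁻¹' {x n} := by
      ext z; simp
    rw [he]
    exact hN.isOpen_biInter fun n _ => (isOpen_discrete _).preimage (continuous_apply n)
  obtain ⟨z, hz, h, rfl⟩ := mem_closure_iff.mp hx _ hopen (fun n _ => rfl)
  exact ⟨h, hz⟩

lemma exists_missing (B : Set ℕ) (hB : 0 ∉ B) {x : ℤ → Bool} (hx : x ∈ Xphi B) (b : B) :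
    ∃ r : ZMod (b:ℕ), ∀ n ∈ suppSet x, (n : ZMod (b:ℕ)) ≠ r := by
  haveI : NeZero ((b:ℕ)) := ⟨fun h0 => hB (h0 ▸ b.2)⟩
  by_contra hcon
  push_neg at hcon
  choose f hf1 hf2 using hcon
  obtain ⟨h, hh⟩ := approx_lemma B hx (Set.finite_range f)
  set r : ZMod (b:ℕ) := -((h : Gr B) b) with hr
  have h1 : phi B h (f r) = true := by rw [hh (f r) ⟨r, rfl⟩]; exact hf1 r
  have h2 := (phi_eq_true_iff B h (f r)).mp h1 b
  rw [hf2 r] at h2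
  exact h2 (by rw [hr]; ring)

lemma ncard_compl_singleton {m : ℕ} [NeZero m] (a : ZMod m) :
    ({a}ᶜ : Set (ZMod m)).ncard = m - 1 := by
  have := Set.ncard_add_ncard_compl ({a} : Set (ZMod m))
  rw [Set.ncard_singleton, Nat.card_zmod] at this
  omega

lemma hit_set_eq (B : Set ℕ) (hB : 0 ∉ B)
    {y : ℤ → Bool} (hy : y ∈ Yset B) (b : B) {a : ZMod (b:ℕ)}
    (ha : ∀ n ∈ suppSet y, (n : ZMod (b:ℕ)) ≠ a) :
    {r : ZMod (b:ℕ) | ∃ n ∈ suppSet y, (n : ZMod (b:ℕ)) = r} = {a}ᶜ := by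
  haveI : NeZero ((b:ℕ)) := ⟨fun h0 => hB (h0 ▸ b.2)⟩
  apply Set.eq_of_subset_of_ncard_le
  · rintro r ⟨n, hn, rfl⟩
    exact ha n hn
  · rw [ncard_compl_singleton, hy b]
  · exact Set.toFinite _

/-- A choice function picking an element of the support with a given residue. -/
def pick (x : ℤ → Bool) (b : ℕ) (r : ZMod b) : ℤ :=
  if hc : ∃ n ∈ suppSet x, (n : ZMod b) = r then hc.choose else 0

lemma pick_spec {x : ℤ → Bool} {b : ℕ} {r : ZMod b}
    (hc : ∃ n ∈ suppSet x, (n : ZMod b) = r) :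
    pick x b r ∈ suppSet x ∧ ((pick x b r : ℤ) : ZMod b) = r := by
  rw [pick, dif_pos hc]
  exact ⟨hc.choose_spec.1, hc.choose_spec.2⟩

/-- if `θ` reads, for `y ∈ Y`, the unique missing residue class
of `supp y` mod each `b ∈ 𝓑` (i.e. `supp y ∩ (bℤ − θ(y)_b) = ∅`), then
`θ(Y ∩ X̃_φ) = θ(Y ∩ X_φ) ⊆ H`. -/
theorem statement19 (B : Set ℕ) (hB : 0 ∉ B)
    (θ : (ℤ → Bool) → Gr B)
    (hθ : ∀ y ∈ Yset B, ∀ b : B, ∀ n ∈ suppSet y, (n : ZMod (b:ℕ)) ≠ -(θ y b)) :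
    θ '' (Yset B ∩ heredClosure (Xphi B)) = θ '' (Yset B ∩ Xphi B) ∧
    ∀ x ∈ Yset B ∩ Xphi B, θ x ∈ Hsub B := by
  have key2 : ∀ x ∈ Yset B ∩ Xphi B, θ x ∈ Hsub B := by
    rintro x ⟨hxY, hxX⟩
    have hcl : IsClosed ((Hsub B : Set (Gr B))) := AddSubgroup.isClosed_topologicalClosure _
    have hmem : θ x ∈ closure ((Hsub B : Set (Gr B))) := by
      rw [mem_closure_iff]
      intro o ho hoθ
      obtain ⟨I, u, hu, hsub⟩ := isOpen_pi_iff.mp ho _ hoθ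
      have hw : ∀ (b : B) (r : ZMod (b:ℕ)), r ≠ -(θ x b) →
          ∃ n ∈ suppSet x, (n : ZMod (b:ℕ)) = r := by
        intro b r hr
        have he := hit_set_eq B hB hxY b (hθ x hxY b)
        have : r ∈ {r : ZMod (b:ℕ) | ∃ n ∈ suppSet x, (n : ZMod (b:ℕ)) = r} := by
          rw [he]; exact hr
        exact this
      set N : Set ℤ := ⋃ b ∈ (I : Set B), Set.range (pick x (b:ℕ)) with hN
      have hNfin : N.Finite :=
        Set.Finite.biUnion I.finite_toSet fun b _ => by
          haveI : NeZero ((b:ℕ)) := ⟨fun h0 => hB (h0 ▸ b.2)⟩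
          exact Set.finite_range _
      obtain ⟨h, hh⟩ := approx_lemma B hxX hNfin
      refine ⟨(h : Gr B), hsub fun b hbI => ?_, h.2⟩
      have hagree : (h : Gr B) b = θ x b := by
        by_contra hne
        have hr : -((h : Gr B) b) ≠ -(θ x b) := fun hc => hne (neg_injective hc)
        obtain hc := hw b _ hr
        obtain ⟨hp1, hp2⟩ := pick_spec hc
        set n := pick x (b:ℕ) (-((h : Gr B) b)) with hn
        have hmemN : n ∈ N := Set.mem_biUnion hbI ⟨_, rfl⟩
        have h1 : phi B h n = true := by rw [hh n hmemN]; exact hp1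
        have h2 := (phi_eq_true_iff B h n).mp h1 b
        rw [hp2] at h2
        exact h2 (by ring)
      rw [hagree]
      exact (hu b hbI).2
    rwa [hcl.closure_eq] at hmem
  have key1 : ∀ y ∈ Yset B ∩ heredClosure (Xphi B), ∃ x ∈ Yset B ∩ Xphi B, θ x = θ y := by
    rintro y ⟨hyY, x, hxX, hle⟩
    have hsupp : suppSet y ⊆ suppSet x := by
      intro n hn
      have h1 := hle n
      have hn' : y n = true := hn
      rw [hn'] at h1
      exact le_antisymm (Bool.le_true _) h1
    have hSx : ∀ b : B,
        {r : ZMod (b:ℕ) | ∃ n ∈ suppSet x, (n : ZMod (b:ℕ)) = r} = {-(θ y b)}ᶜ := by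
      intro b
      obtain ⟨r, hrmiss⟩ := exists_missing B hB hxX b
      have hitEq := hit_set_eq B hB hyY b (hθ y hyY b)
      have hre : r = -(θ y b) := by
        by_contra hne
        have : r ∈ {r : ZMod (b:ℕ) | ∃ n ∈ suppSet y, (n : ZMod (b:ℕ)) = r} := by
          rw [hitEq]; exact hne
        obtain ⟨n, hn, hn2⟩ := this
        exact hrmiss n (hsupp hn) hn2
      subst hre
      apply Set.Subset.antisymm
      · rintro r' ⟨n, hn, rfl⟩
        exact hrmiss n hn
      · intro r' hr'
        have : r' ∈ {r : ZMod (b:ℕ) | ∃ n ∈ suppSet y, (n : ZMod (b:ℕ)) = r} := by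
          rw [hitEq]; exact hr'
        obtain ⟨n, hn, hn2⟩ := this
        exact ⟨n, hsupp hn, hn2⟩
    have hxY : x ∈ Yset B := by
      intro b
      haveI : NeZero ((b:ℕ)) := ⟨fun h0 => hB (h0 ▸ b.2)⟩
      rw [hSx b, ncard_compl_singleton]
    have hθeq : θ x = θ y := by
      funext b
      have h1 := hθ x hxY b
      by_contra hne
      have : -(θ x b) ∈ ({-(θ y b)}ᶜ : Set (ZMod (b:ℕ))) :=
        fun hc => hne (neg_injective hc)
      rw [← hSx b] at this
      obtain ⟨n, hn, hn2⟩ := this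
      exact h1 n hn hn2
    exact ⟨x, ⟨hxY, hxX⟩, hθeq⟩
  refine ⟨Set.Subset.antisymm ?_ ?_, key2⟩
  · rintro g ⟨y, hy, rfl⟩
    obtain ⟨x, hx, hxe⟩ := key1 y hy
    exact ⟨x, hx, hxe⟩
  · rintro g ⟨x, ⟨hxY, hxX⟩, rfl⟩
    exact ⟨x, ⟨hxY, x, hxX, fun n => le_refl _⟩, rfl⟩

end BFree
end
end
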